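/- arXiv:1508.06441 — 2 statements merged into one kernel-verified Lean document; each statement's English description precedes it below -/
import Mathlib

section
/- Let X be a Hausdorff topological space containing an uncountable closed discrete subspace of cardinality ℵ₁. Then the compact metrizable-into-ω₁ product (ω₁ + 1)^{ω} embeds topologically into (CL(X), τ_F), the hyperspace of nonempty closed subsets of X with the Fell topology. -/
/-
Fix a base point of `D` and points `d (n, a) ∈ D` for `n : ℕ`, `a ≤ ω₁`, all distinct, and send
`x : ℕ → ω₁ + 1` to the closed set `{base} ∪ {d (n, a) | a < x n}`. A compact set meets the closed
discrete set `D` in finitely many points, so on maps with values inside `D` Fell-continuity only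
asks each condition `d ∈ f x` to be clopen in `x`; here it is `a < x n`, and `Ioi a` is clopen in
an ordinal. Closed subsets of `D` are told apart by the clopen sets `{A | d ∈ A}`, so a continuous
injection from the compact space `(ω₁ + 1)^ℕ` is an embedding.
-/

/-- The hyperspace of nonempty closed subsets of `X`. -/
def CL (X : Type*) [TopologicalSpace X] : Type _ := {A : Set X // A.Nonempty ∧ IsClosed A}

/-- The Fell topology on `CL X`, generated by the subbase of sets
`U⁻ = {A : A ∩ U ≠ ∅}` for `U` open, and `(Kᶜ)⁺ = {A : A ∩ K = ∅}` for `K` compact. -/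
def FellTopology (X : Type*) [TopologicalSpace X] : TopologicalSpace (CL X) :=
  TopologicalSpace.generateFrom
    ({S | ∃ U : Set X, IsOpen U ∧ S = {A : CL X | (A.1 ∩ U).Nonempty}} ∪
     {S | ∃ K : Set X, IsCompact K ∧ S = {A : CL X | A.1 ∩ K = ∅}})

open Set Topology Function Cardinal

instance CL.instTopologicalSpace {X : Type*} [TopologicalSpace X] : TopologicalSpace (CL X) :=
  FellTopology X

namespace CL

variable {X : Type*} [TopologicalSpace X] {D : Set X}

theorem isOpen_setOf_inter_nonempty {U : Set X} (hU : IsOpen U) :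
    IsOpen {A : CL X | (A.1 ∩ U).Nonempty} :=
  TopologicalSpace.isOpen_generateFrom_of_mem (Or.inl ⟨U, hU, rfl⟩)

theorem isOpen_setOf_inter_eq_empty {K : Set X} (hK : IsCompact K) :
    IsOpen {A : CL X | A.1 ∩ K = ∅} :=
  TopologicalSpace.isOpen_generateFrom_of_mem (Or.inr ⟨K, hK, rfl⟩)

/-- A compact set meets `D` in finitely many points, so the preimage of each miss-set is a
finite intersection. -/
theorem continuous_of_isClopen_setOf_mem {Y : Type*} [TopologicalSpace Y] (hDcl : IsClosed D)
    (hD : IsDiscrete D) {g : Y → CL X} (hgD : ∀ y, (g y).1 ⊆ D)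
    (hg : ∀ d ∈ D, IsClopen {y | d ∈ (g y).1}) : Continuous g := by
  refine continuous_generateFrom_iff.mpr ?_
  rintro _ (⟨U, -, rfl⟩ | ⟨K, hK, rfl⟩)
  · have hpre : g ⁻¹' {A | (A.1 ∩ U).Nonempty} = ⋃ d ∈ U ∩ D, {y | d ∈ (g y).1} := by
      ext y
      simp only [mem_preimage, mem_ofPred_eq, mem_iUnion, mem_inter_iff, exists_prop]
      exact ⟨fun ⟨d, hdg, hdU⟩ => ⟨d, ⟨hdU, hgD y hdg⟩, hdg⟩,
        fun ⟨d, ⟨hdU, _⟩, hdg⟩ => ⟨d, hdg, hdU⟩⟩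
    rw [hpre]
    exact isOpen_biUnion fun d hd => (hg d hd.2).isOpen
  · have hfin : (K ∩ D).Finite := (hK.inter_right hDcl).finite (hD.mono inter_subset_right)
    have hpre : g ⁻¹' {A | A.1 ∩ K = ∅} = ⋂ d ∈ K ∩ D, {y | d ∈ (g y).1}ᶜ := by
      ext y
      simp only [mem_preimage, mem_ofPred_eq, mem_iInter, mem_inter_iff, mem_compl_iff,
        eq_empty_iff_forall_notMem]
      exact ⟨fun h d hd hdg => h d ⟨hdg, hd.1⟩, fun h d hd => h d ⟨hd.2, hgD y hd.1⟩ hd.1⟩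
    rw [hpre]
    exact hfin.isOpen_biInter fun d hd => (hg d hd.2).compl.isOpen

/-- Among closed subsets of a discrete set `D`, containing `d ∈ D` means hitting an open `U`
with `U ∩ D = {d}`, and not containing it means missing the compact set `{d}`. -/
theorem isClopen_setOf_mem_of_subset (hD : IsDiscrete D) {d : X} (hd : d ∈ D) :
    IsClopen {A : {A : CL X // A.1 ⊆ D} | d ∈ A.1.1} := by
  obtain ⟨U, hU, hUD⟩ := isDiscrete_iff_forall_mem_exists_isOpen.mp hD d hd
  refine ⟨?_, ?_⟩
  · have hpre : {A : {A : CL X // A.1 ⊆ D} | d ∈ A.1.1}ᶜ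
        = Subtype.val ⁻¹' {A : CL X | A.1 ∩ {d} = ∅} := by
      ext A
      simp
    rw [← isOpen_compl_iff, hpre]
    exact (isOpen_setOf_inter_eq_empty isCompact_singleton).preimage continuous_subtype_val
  · have hpre : {A : {A : CL X // A.1 ⊆ D} | d ∈ A.1.1}
        = Subtype.val ⁻¹' {A : CL X | (A.1 ∩ U).Nonempty} := by
      ext ⟨A, hA⟩
      have hAU : A.1 ∩ U = A.1 ∩ {d} := by
        rw [← hUD, ← inter_assoc, inter_right_comm, inter_eq_left.mpr hA]
      simp [hAU]
    rw [hpre]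
    exact (isOpen_setOf_inter_nonempty hU).preimage continuous_subtype_val

theorem totallySeparatedSpace_subtype_subset (hD : IsDiscrete D) :
    TotallySeparatedSpace {A : CL X // A.1 ⊆ D} := by
  refine totallySeparatedSpace_iff_exists_isClopen.mpr fun A B hAB => ?_
  obtain ⟨d, hdA, hdB⟩ | ⟨d, hdB, hdA⟩ : (A.1.1 \ B.1.1).Nonempty ∨ (B.1.1 \ A.1.1).Nonempty := by
    by_contra! h
    exact hAB (Subtype.ext (Subtype.ext
      ((sdiff_eq_empty.mp h.1).antisymm (sdiff_eq_empty.mp h.2))))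
  · exact ⟨_, isClopen_setOf_mem_of_subset hD (A.2 hdA), hdA, hdB⟩
  · exact ⟨_, (isClopen_setOf_mem_of_subset hD (B.2 hdB)).compl, hdA, not_not.mpr hdB⟩

theorem isEmbedding_of_isClopen_setOf_mem {Y : Type*} [TopologicalSpace Y] [CompactSpace Y]
    (hDcl : IsClosed D) (hD : IsDiscrete D) {g : Y → CL X} (hinj : Injective g)
    (hgD : ∀ y, (g y).1 ⊆ D) (hg : ∀ d ∈ D, IsClopen {y | d ∈ (g y).1}) : IsEmbedding g := by
  have := totallySeparatedSpace_subtype_subset hD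
  let g' : Y → {A : CL X // A.1 ⊆ D} := fun y => ⟨g y, hgD y⟩
  have hg' : IsEmbedding g' :=
    ((continuous_of_isClopen_setOf_mem hDcl hD hgD hg).subtype_mk hgD).isClosedEmbedding
      (fun y z h => hinj (congrArg Subtype.val h)) |>.isEmbedding
  exact IsEmbedding.subtypeVal.comp hg'

end CL

section Cut

variable {α : Type*} [LinearOrder α]

/-- The base point `none` keeps the set nonempty. -/
def cutSet (x : ℕ → α) : Set (Option (ℕ × α)) := insert none (some '' {q | q.2 < x q.1})

theorem some_mem_cutSet {x : ℕ → α} {q : ℕ × α} : some q ∈ cutSet x ↔ q.2 < x q.1 := by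
  simp [cutSet]

theorem le_of_cutSet_subset {x y : ℕ → α} (h : cutSet x ⊆ cutSet y) : x ≤ y := by
  intro n
  by_contra! hlt
  exact lt_irrefl (y n) (some_mem_cutSet.mp (h ((some_mem_cutSet (q := (n, y n))).mpr hlt)))

theorem cutSet_injective : Injective (cutSet (α := α)) := fun _ _ h =>
  (le_of_cutSet_subset h.le).antisymm (le_of_cutSet_subset h.ge)

theorem isClopen_setOf_mem_cutSet [TopologicalSpace α] (hα : ∀ a : α, IsClopen (Ioi a))
    (i : Option (ℕ × α)) : IsClopen {x : ℕ → α | i ∈ cutSet x} := by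
  cases i with
  | none => simpa [cutSet] using isClopen_univ
  | some q =>
    simp only [some_mem_cutSet]
    exact (hα q.2).preimage (continuous_apply q.1)

end Cut

theorem exists_isEmbedding_pi_nat {X α : Type*} [TopologicalSpace X] [LinearOrder α]
    [TopologicalSpace α] [CompactSpace α] (hα : ∀ a : α, IsClopen (Ioi a)) {D : Set X}
    (hDcl : IsClosed D) (hD : IsDiscrete D) {p : Option (ℕ × α) → X} (hp : Injective p)
    (hpD : range p ⊆ D) : ∃ f : (ℕ → α) → CL X, IsEmbedding f := by
  have hsub : ∀ x, p '' cutSet x ⊆ D := fun x => (image_subset_range _ _).trans hpD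
  refine ⟨fun x => ⟨p '' cutSet x, (insert_nonempty _ _).image p,
    isClosed_of_subset_discrete_closed (hsub x) hD hDcl⟩,
    CL.isEmbedding_of_isClopen_setOf_mem hDcl hD
      (fun x y h => cutSet_injective (hp.image_injective (congrArg Subtype.val h))) hsub ?_⟩
  intro d _
  by_cases hd : d ∈ range p
  · obtain ⟨i, rfl⟩ := hd
    simp only [hp.mem_set_image]
    exact isClopen_setOf_mem_cutSet hα i
  · have hempty : {x : ℕ → α | d ∈ p '' cutSet x} = ∅ :=
      eq_empty_of_forall_notMem fun x hx => hd (image_subset_range _ _ hx)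
    simp only [hempty, isClopen_empty]

theorem isClopen_Ioi {α : Type*} [LinearOrder α] [TopologicalSpace α] [OrderTopology α]
    [SuccOrder α] [NoMaxOrder α] (a : α) : IsClopen (Ioi a) :=
  ⟨by rw [← compl_Iic, ← Order.Iio_succ]; exact isOpen_Iio.isClosed_compl, isOpen_Ioi⟩

theorem Cardinal.mk_option_prod_nat_Iic_ord {c : Cardinal.{u}} (hc : ℵ₀ ≤ c) :
    #(Option (ℕ × Iic c.ord)) = lift.{u + 1} c := by
  have hc' : ℵ₀ ≤ lift.{u + 1} c := aleph0_le_lift.mpr hc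
  rw [mk_option, mk_prod, ← Iio_insert, mk_insert self_notMem_Iio, mk_Iio_ordinal, card_ord,
    mk_nat, lift_aleph0, lift_uzero, add_one_of_aleph0_le hc', aleph0_mul_eq hc',
    add_one_of_aleph0_le hc']

theorem stmt_6_general {X : Type*} [TopologicalSpace X]
    (D : Set X) (hDcl : IsClosed D) (hDdisc : DiscreteTopology D)
    (hcard : Cardinal.mk D = Cardinal.aleph 1) :
    ∃ f : (ℕ → Set.Iic (Cardinal.aleph 1).ord) → CL X,
      @Topology.IsEmbedding _ _ _ (FellTopology X) f := by
  obtain ⟨p⟩ : Nonempty (Option (ℕ × Iic (aleph 1).ord) ↪ D) := by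
    refine lift_mk_le'.mp ?_
    rw [mk_option_prod_nat_Iic_ord (aleph0_le_aleph 1), hcard]
    simp
  have : CompactSpace (Iic (aleph 1).ord) := by
    rw [← Icc_bot]
    exact isCompact_iff_compactSpace.mp isCompact_Icc
  exact exists_isEmbedding_pi_nat (fun a => (isClopen_Ioi a.1).preimage continuous_subtype_val)
    hDcl (isDiscrete_iff_discreteTopology.mpr hDdisc) (Subtype.val_injective.comp p.injective)
    (by rintro _ ⟨i, rfl⟩; exact (p i).2)

/-- If a Hausdorff space `X` contains a closed discrete subspace of cardinality `ℵ₁`,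
then `(ω₁ + 1)^{ω}` embeds into `(CL X, τ_F)`. -/
theorem stmt_6 {X : Type*} [TopologicalSpace X] [T2Space X]
    (D : Set X) (hDcl : IsClosed D) (hDdisc : DiscreteTopology D)
    (hcard : Cardinal.mk D = Cardinal.aleph 1) :
    ∃ f : (ℕ → Set.Iic (Cardinal.aleph 1).ord) → CL X,
      @Topology.IsEmbedding _ _ _ (FellTopology X) f :=
  stmt_6_general D hDcl hDdisc hcard
end

section
/- Let (X,d) be a non-separable metric space in which every closed proper ball is totally bounded. Then (ω₁ + 1)^{ω₁} embeds topologically into (CL(X), τ_{w(d)}), the hyperspace of nonempty closed subsets of X with the Wijsman topology. -/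
open Metric Set Topology TopologicalSpace Cardinal

/-- The Wijsman topology on `CL X`: the weakest topology making `A ↦ d(x, A)`
continuous for every `x : X`. -/
noncomputable def WijsmanTopology (X : Type*) [MetricSpace X] : TopologicalSpace (CL X) :=
  ⨅ x : X, TopologicalSpace.induced (fun A : CL X => Metric.infDist x A.1) inferInstance

section Aux

universe u v w

variable {X : Type w} [MetricSpace X]

/-- An `ε`-separated set is closed. -/
lemma sep_isClosed {ε : ℝ} (hε : 0 < ε) {s : Set X}
    (hs : ∀ a ∈ s, ∀ b ∈ s, a ≠ b → ε ≤ dist a b) : IsClosed s := by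
  rw [← isOpen_compl_iff, Metric.isOpen_iff]
  intro y hy
  by_cases h : ∃ a ∈ s, dist y a < ε / 2
  · obtain ⟨a, haS, hya⟩ := h
    have hya0 : 0 < dist y a := by
      rw [dist_pos]; rintro rfl; exact hy haS
    refine ⟨min (ε / 2) (dist y a), lt_min (by linarith) hya0, ?_⟩
    intro b hb hbS
    rw [mem_ball] at hb
    have hba : b ≠ a := by
      rintro rfl
      rw [dist_comm] at hb
      exact absurd (lt_min_iff.1 hb).2 (lt_irrefl _)
    have h1 : dist b y < ε / 2 := lt_of_lt_of_le hb (min_le_left _ _)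
    have h2 : dist b a ≤ dist b y + dist y a := dist_triangle _ _ _
    linarith [hs b hbS a haS hba]
  · push_neg at h
    refine ⟨ε / 2, by linarith, ?_⟩
    intro b hb hbS
    exact absurd (by rw [dist_comm]; exact mem_ball.1 hb) (not_lt.2 (h b hbS))

/-- Nonseparability gives an uncountable `ε`-separated set. -/
lemma exists_uncountable_sep (hsep : ¬ SeparableSpace X) :
    ∃ ε : ℝ, 0 < ε ∧ ∃ S : Set X,
      (∀ a ∈ S, ∀ b ∈ S, a ≠ b → ε ≤ dist a b) ∧ ¬ S.Countable := by
  by_contra hcon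
  push_neg at hcon
  apply hsep
  have key : ∀ n : ℕ, ∃ S : Set X,
      (∀ a ∈ S, ∀ b ∈ S, a ≠ b → (1 : ℝ)/(n+1) ≤ dist a b) ∧
      ∀ y : X, ∃ s ∈ S, dist y s < 1/(n+1) := by
    intro n
    have hpos : (0:ℝ) < 1/(n+1) := by positivity
    obtain ⟨S, hS⟩ := zorn_subset
        {s : Set X | ∀ a ∈ s, ∀ b ∈ s, a ≠ b → (1:ℝ)/(n+1) ≤ dist a b} (by
      intro c hc hchain
      refine ⟨⋃₀ c, ?_, fun s hs => subset_sUnion_of_mem hs⟩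
      rintro a ⟨s, hsc, has⟩ b ⟨t, htc, hbt⟩ hab
      rcases hchain.total hsc htc with h | h
      · exact hc htc a (h has) b hbt hab
      · exact hc hsc a has b (h hbt) hab)
    refine ⟨S, hS.prop, ?_⟩
    intro y
    by_contra hy
    push_neg at hy
    have hyS : y ∉ S := by
      intro h
      have h0 := hy y h
      rw [dist_self] at h0
      linarith
    have hins : insert y S ∈
        {s : Set X | ∀ a ∈ s, ∀ b ∈ s, a ≠ b → (1:ℝ)/(n+1) ≤ dist a b} := by
      rintro a (rfl | ha) b (rfl | hb) hab
      · exact absurd rfl hab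
      · exact hy b hb
      · rw [dist_comm]; exact hy a ha
      · exact hS.prop a ha b hb hab
    exact hyS (hS.2 hins (subset_insert y S) (mem_insert y S))
  choose S hS1 hS2 using key
  have hcount : ∀ n, (S n).Countable := fun n =>
    hcon (1/(n+1)) (by positivity) (S n) (hS1 n)
  refine ⟨⟨⋃ n, S n, countable_iUnion hcount, ?_⟩⟩
  rw [Metric.dense_iff]
  intro y r hr
  obtain ⟨n, hn⟩ := exists_nat_one_div_lt hr
  obtain ⟨s, hsS, hys⟩ := hS2 n y
  exact ⟨s, mem_ball'.2 (hys.trans hn), mem_iUnion.2 ⟨n, hsS⟩⟩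

lemma wijsman_t2 : @T2Space (CL X) (WijsmanTopology X) := by
  have hτ : WijsmanTopology X = TopologicalSpace.induced
      (fun A : CL X => (fun y => Metric.infDist y A.1 : X → ℝ)) Pi.topologicalSpace := by
    rw [WijsmanTopology]
    simp only [Pi.topologicalSpace, induced_iInf, induced_compose]
    rfl
  have hjinj : Function.Injective
      (fun A : CL X => (fun y => Metric.infDist y A.1 : X → ℝ)) := by
    intro A B h
    apply Subtype.ext
    ext z
    have h1 := congrFun h z
    simp only at h1
    rw [A.2.2.mem_iff_infDist_zero A.2.1, B.2.2.mem_iff_infDist_zero B.2.1, h1]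
  letI : TopologicalSpace (CL X) := WijsmanTopology X
  exact Topology.IsEmbedding.t2Space (Y := X → ℝ) ⟨⟨hτ⟩, hjinj⟩

lemma main_embed {κ : Type v} {Λ : Ordinal.{u}} {ε : ℝ} (hε : 0 < ε)
    (x : Option (κ × Set.Iio Λ) → X) (hxinj : Function.Injective x)
    (hxsep : ∀ i j, i ≠ j → ε ≤ dist (x i) (x j))
    (hbdd : ∀ y : X, BddAbove (Set.range fun z => dist y z))
    (hfin : ∀ (y : X) (t : ℝ), 0 ≤ t → t < ⨆ z, dist y z →
      {i : Option (κ × Set.Iio Λ) | dist y (x i) ≤ t}.Finite) :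
    ∃ f : (κ → Set.Iic Λ) → CL X, @Topology.IsEmbedding _ _ _ (WijsmanTopology X) f := by
  classical
  letI τ : TopologicalSpace (CL X) := WijsmanTopology X
  haveI : @T2Space (CL X) τ := wijsman_t2
  haveI : CompactSpace (Set.Iic Λ) :=
    isCompact_iff_compactSpace.mp (by rw [← Set.Icc_bot]; exact isCompact_Icc)
  have hρ_ge : ∀ y z : X, dist y z ≤ ⨆ w, dist y w := fun y z => le_ciSup (hbdd y) z
  -- the family of closed sets
  let keep : Option (κ × Set.Iio Λ) → (κ → Set.Iic Λ) → Prop := fun i φ =>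
    i.elim True fun q => (q.2 : Ordinal) < (φ q.1 : Ordinal)
  let A : (κ → Set.Iic Λ) → Set X := fun φ => x '' {i | keep i φ}
  have hpA : ∀ φ, x none ∈ A φ := fun φ => ⟨none, trivial, rfl⟩
  have hmemA : ∀ φ i, x i ∈ A φ ↔ keep i φ := by
    intro φ i
    constructor
    · rintro ⟨j, hj, hji⟩
      rwa [← hxinj hji]
    · exact fun h => ⟨i, h, rfl⟩
  have hA_closed : ∀ φ, IsClosed (A φ) := by
    intro φ
    apply sep_isClosed hε
    rintro a ⟨i, -, rfl⟩ b ⟨j, -, rfl⟩ hab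
    exact hxsep i j fun h => hab (by rw [h])
  let Φ : (κ → Set.Iic Λ) → CL X := fun φ => ⟨A φ, ⟨x none, hpA φ⟩, hA_closed φ⟩
  -- injectivity
  have hkey : ∀ φ ψ : κ → Set.Iic Λ, A φ = A ψ → ∀ α, (φ α : Ordinal) ≤ (ψ α : Ordinal) := by
    intro φ ψ hAA α
    by_contra hlt
    push_neg at hlt
    have hΛ : (ψ α : Ordinal) ∈ Set.Iio Λ := lt_of_lt_of_le hlt (φ α).2
    set i : Option (κ × Set.Iio Λ) := some (α, ⟨(ψ α : Ordinal), hΛ⟩) with hi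
    have h1 : x i ∈ A φ := (hmemA φ i).2 hlt
    rw [hAA] at h1
    have h2 := (hmemA ψ i).1 h1
    exact absurd h2 (lt_irrefl _)
  have hΦinj : Function.Injective Φ := by
    intro φ ψ h
    have hAA : A φ = A ψ := congrArg Subtype.val h
    funext α
    exact Subtype.ext (le_antisymm (hkey φ ψ hAA α) (hkey ψ φ hAA.symm α))
  -- clopen basic sets
  let V : Option (κ × Set.Iio Λ) → Set (κ → Set.Iic Λ) := fun i => {ψ | keep i ψ}
  have hVopen : ∀ i, IsOpen (V i) := by
    rintro (_ | ⟨α, ξ⟩)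
    · have : V none = Set.univ := by ext ψ; simp [V, keep]
      rw [this]; exact isOpen_univ
    · have : V (some (α, ξ)) =
          (fun ψ : κ → Set.Iic Λ => (ψ α : Ordinal)) ⁻¹' (Set.Ioi (ξ : Ordinal)) := rfl
      rw [this]
      exact isOpen_Ioi.preimage (continuous_subtype_val.comp (continuous_apply α))
  have hVcopen : ∀ i, IsOpen (V i)ᶜ := by
    rintro (_ | ⟨α, ξ⟩)
    · have : (V none)ᶜ = (∅ : Set _) := by ext ψ; simp [V, keep]
      rw [this]; exact isOpen_empty
    · have : (V (some (α, ξ)))ᶜ =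
          (fun ψ : κ → Set.Iic Λ => (ψ α : Ordinal)) ⁻¹' (Set.Iio ((ξ : Ordinal) + 1)) := by
        ext ψ
        simp only [V, keep, Set.mem_compl_iff, Set.mem_setOf_eq, Set.mem_preimage, Set.mem_Iio,
          Option.elim, not_lt, Ordinal.add_one_eq_succ, Order.lt_succ_iff]
      rw [this]
      exact isOpen_Iio.preimage (continuous_subtype_val.comp (continuous_apply α))
  -- continuity
  have hcont : @Continuous _ _ _ τ Φ := by
    show @Continuous _ _ _ (⨅ y : X, TopologicalSpace.induced
      (fun B : CL X => Metric.infDist y B.1) inferInstance) Φ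
    rw [continuous_iInf_rng]
    intro y
    rw [continuous_induced_rng]
    have hgoal : ((fun B : CL X => Metric.infDist y B.1) ∘ Φ)
        = fun φ => Metric.infDist y (A φ) := rfl
    rw [hgoal]
    rw [continuous_iff_continuousAt]
    intro φ
    rw [ContinuousAt, Metric.tendsto_nhds]
    intro δ hδ
    have hne : (A φ).Nonempty := ⟨x none, hpA φ⟩
    obtain ⟨a, haA, hay⟩ := (Metric.infDist_lt_iff hne).1
      (lt_add_of_pos_right (Metric.infDist y (A φ)) hδ)
    obtain ⟨i0, hi0keep, rfl⟩ := haA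
    have hF : {i | dist y (x i) ≤ Metric.infDist y (A φ) - δ/2}.Finite := by
      rcases lt_or_ge (Metric.infDist y (A φ) - δ/2) 0 with h | h
      · have : {i | dist y (x i) ≤ Metric.infDist y (A φ) - δ/2} = ∅ := by
          ext i
          simp only [Set.mem_setOf_eq, Set.mem_empty_iff_false, iff_false, not_le]
          calc Metric.infDist y (A φ) - δ/2 < 0 := h
          _ ≤ dist y (x i) := dist_nonneg
        rw [this]; exact Set.finite_empty
      · refine hfin y _ h ?_
        calc Metric.infDist y (A φ) - δ/2 < Metric.infDist y (A φ) := by linarith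
        _ ≤ dist y (x none) := Metric.infDist_le_dist_of_mem (hpA φ)
        _ ≤ ⨆ w, dist y w := hρ_ge y _
    set U2 : Set (κ → Set.Iic Λ) :=
      ⋂ i ∈ {i | dist y (x i) ≤ Metric.infDist y (A φ) - δ/2},
        (if keep i φ then V i else (V i)ᶜ) with hU2
    have hU2open : IsOpen U2 := hF.isOpen_biInter fun i _ => by
      by_cases h : keep i φ
      · rw [if_pos h]; exact hVopen i
      · rw [if_neg h]; exact hVcopen i
    have hφU2 : φ ∈ U2 := by
      rw [hU2]
      refine Set.mem_iInter₂.2 fun i _ => ?_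
      by_cases h : keep i φ
      · rw [if_pos h]; exact h
      · rw [if_neg h]; exact h
    refine Filter.eventually_of_mem
      (IsOpen.mem_nhds ((hVopen i0).inter hU2open) ⟨hi0keep, hφU2⟩) ?_
    rintro ψ ⟨hψ1, hψ2⟩
    rw [Real.dist_eq, abs_lt]
    constructor
    · -- lower bound
      rw [neg_lt, neg_sub]
      by_contra hcon
      push_neg at hcon
      have hlt : Metric.infDist y (A ψ) < Metric.infDist y (A φ) - δ/2 := by linarith
      obtain ⟨b, hbA, hby⟩ := (Metric.infDist_lt_iff ⟨x none, hpA ψ⟩).1 hlt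
      obtain ⟨j, hjkeep, rfl⟩ := hbA
      have hjF : j ∈ {i | dist y (x i) ≤ Metric.infDist y (A φ) - δ/2} := le_of_lt hby
      have hψj := Set.mem_iInter₂.1 hψ2 j hjF
      by_cases hk : keep j φ
      · rw [if_pos hk] at hψj
        have := Metric.infDist_le_dist_of_mem (x := y) ((hmemA φ j).2 hk)
        linarith
      · rw [if_neg hk] at hψj
        exact hψj hjkeep
    · -- upper bound
      have hx0 : x i0 ∈ A ψ := (hmemA ψ i0).2 hψ1
      have := Metric.infDist_le_dist_of_mem (x := y) hx0
      linarith
  refine ⟨Φ, ?_⟩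
  exact (hcont.isClosedEmbedding hΦinj).toIsEmbedding


lemma glue (hsep : ¬ TopologicalSpace.SeparableSpace X)
    (htb : ∀ (x : X) (r : ℝ), 0 ≤ r → Metric.closedBall x r ≠ Set.univ →
      TotallyBounded (Metric.closedBall x r)) :
    ∃ f : ((Quotient.out (Cardinal.aleph 1) : Type v)
        → Set.Iic (Cardinal.aleph 1 : Cardinal.{u}).ord) → CL X,
      @Topology.IsEmbedding _ _ _ (WijsmanTopology X) f := by
  classical
  have hne : Nonempty X := by
    by_contra h
    rw [not_nonempty_iff] at h
    refine hsep ⟨⟨∅, countable_empty, ?_⟩⟩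
    rw [dense_iff_closure_eq, closure_empty]
    exact (Set.univ_eq_empty_iff.2 h).symm
  have hbdd : ∀ y : X, BddAbove (Set.range fun z => dist y z) := by
    obtain ⟨x0⟩ := hne
    have hx0 : ∃ R : ℝ, Metric.closedBall x0 R = Set.univ := by
      by_contra hR
      push_neg at hR
      apply hsep
      rw [← isSeparable_univ_iff]
      have huniv : (Set.univ : Set X) = ⋃ n : ℕ, Metric.closedBall x0 n := by
        ext z
        simp only [Set.mem_univ, true_iff, Set.mem_iUnion, Metric.mem_closedBall]
        obtain ⟨n, hn⟩ := exists_nat_ge (dist z x0)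
        exact ⟨n, hn⟩
      rw [huniv]
      exact IsSeparable.iUnion fun n => (htb x0 n n.cast_nonneg (hR n)).isSeparable
    obtain ⟨R, hR⟩ := hx0
    intro y
    refine ⟨R + dist y x0, ?_⟩
    rintro r ⟨z, rfl⟩
    have hz : z ∈ Metric.closedBall x0 R := hR ▸ Set.mem_univ z
    rw [Metric.mem_closedBall] at hz
    calc dist y z ≤ dist y x0 + dist x0 z := dist_triangle _ _ _
    _ ≤ dist y x0 + R := by rw [dist_comm x0 z]; linarith
    _ = R + dist y x0 := by ring
  obtain ⟨ε, hε, S, hSsep, hScnt⟩ := exists_uncountable_sep hsep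
  have hScard : Cardinal.aleph 1 ≤ #S := by
    rw [← not_lt, ← Cardinal.countable_iff_lt_aleph_one]
    exact hScnt
  have hemb : Nonempty ((Option ((Quotient.out (Cardinal.aleph 1) : Type v)
      × Set.Iio (Cardinal.aleph 1 : Cardinal.{u}).ord)) ↪ ↥S) := by
    have hcard : #(Option ((Quotient.out (Cardinal.aleph 1) : Type v)
        × Set.Iio (Cardinal.aleph 1 : Cardinal.{u}).ord)) ≤ Cardinal.aleph 1 := by
      simp only [Cardinal.mk_option, Cardinal.mk_prod, Cardinal.mk_out, Ordinal.mk_Iio_ordinal,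
        Cardinal.card_ord, Cardinal.lift_lift, Cardinal.lift_aleph, Ordinal.lift_one]
      rw [Cardinal.mul_eq_self (Cardinal.aleph0_le_aleph 1),
        Cardinal.add_one_eq (Cardinal.aleph0_le_aleph 1)]
    rw [← Cardinal.lift_mk_le']
    calc Cardinal.lift.{w} _ ≤ Cardinal.lift.{w} (Cardinal.aleph 1) := Cardinal.lift_le.2 hcard
    _ = Cardinal.lift.{max v (u+1)} (Cardinal.aleph 1) := by
        simp only [Cardinal.lift_aleph, Ordinal.lift_one]
    _ ≤ Cardinal.lift.{max v (u+1)} #S := Cardinal.lift_le.2 hScard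
  obtain ⟨e⟩ := hemb
  set x : Option ((Quotient.out (Cardinal.aleph 1) : Type v)
      × Set.Iio (Cardinal.aleph 1 : Cardinal.{u}).ord) → X := fun i => ((e i : ↥S) : X) with hx
  have hxinj : Function.Injective x := fun i j h => e.injective (Subtype.ext h)
  have hxsep : ∀ i j, i ≠ j → ε ≤ dist (x i) (x j) := fun i j hij =>
    hSsep _ (e i).2 _ (e j).2 fun h => hij (e.injective (Subtype.ext h))
  have hfin : ∀ (y : X) (t : ℝ), 0 ≤ t → t < ⨆ z, dist y z →
      {i | dist y (x i) ≤ t}.Finite := by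
    intro y t ht0 htρ
    obtain ⟨z, hz⟩ := exists_lt_of_lt_ciSup htρ
    have hball : Metric.closedBall y t ≠ Set.univ := by
      intro hu
      have hzz : z ∈ Metric.closedBall y t := hu ▸ Set.mem_univ z
      rw [Metric.mem_closedBall, dist_comm] at hzz
      linarith
    have htb' := htb y t ht0 hball
    rw [totallyBounded_iff] at htb'
    obtain ⟨C, hCfin, hCcov⟩ := htb' (ε/3) (by linarith)
    have hsub : {i | dist y (x i) ≤ t} ⊆
        ⋃ c ∈ C, {i | x i ∈ Metric.ball c (ε/3)} := by
      intro i hi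
      have hmem : x i ∈ Metric.closedBall y t := by
        rw [Metric.mem_closedBall, dist_comm]; exact hi
      have := hCcov hmem
      simpa using this
    refine Set.Finite.subset (Set.Finite.biUnion hCfin fun c _ => ?_) hsub
    apply Set.Subsingleton.finite
    intro i hi j hj
    by_contra hij
    have hsep' := hxsep i j hij
    have hd : dist (x i) (x j) < ε := by
      have h1 := Metric.mem_ball.1 hi
      have h2 := Metric.mem_ball.1 hj
      calc dist (x i) (x j) ≤ dist (x i) c + dist c (x j) := dist_triangle _ _ _
      _ < ε/3 + ε/3 := by rw [dist_comm c (x j)]; exact add_lt_add h1 h2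
      _ < ε := by linarith
    linarith
  exact main_embed hε x hxinj hxsep hbdd hfin

end Aux

/-- If `(X,d)` is non-separable and every closed proper ball is totally bounded,
then `(ω₁ + 1)^{ω₁}` embeds into `(CL X, τ_{w(d)})`. -/
theorem stmt_14 {X : Type*} [MetricSpace X]
    (hsep : ¬ TopologicalSpace.SeparableSpace X)
    (htb : ∀ (x : X) (r : ℝ), 0 ≤ r → Metric.closedBall x r ≠ Set.univ →
      TotallyBounded (Metric.closedBall x r)) :
    ∃ f : (Quotient.out (Cardinal.aleph 1) → Set.Iic (Cardinal.aleph 1).ord) → CL X,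
      @Topology.IsEmbedding _ _ _ (WijsmanTopology X) f :=
  glue hsep htb
end
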